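/- ∫_0^1 ∫_0^1 1/(1 − x²y²) dx dy = π²/8. -/

import Mathlib

open MeasureTheory Real Set

lemma myPowInt (n : ℕ) : ∫ y in Set.Ioc (0:ℝ) 1, y ^ n = 1 / ((n:ℝ) + 1) := by
  rw [← intervalIntegral.integral_of_le (by norm_num : (0:ℝ) ≤ 1), integral_pow]
  norm_num

lemma inner_eq (x : ℝ) (hx0 : 0 ≤ x) (hx1 : x < 1) :
    (∫ y in (0:ℝ)..1, 1 / (1 - x ^ 2 * y ^ 2)) = ∑' n : ℕ, x ^ (2*n) / (2*(n:ℝ)+1) := by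
  rw [intervalIntegral.integral_of_le zero_le_one]
  have key : ∀ y ∈ Set.Ioc (0:ℝ) 1, 1 / (1 - x^2*y^2) = ∑' n : ℕ, x^(2*n) * y^(2*n) := by
    intro y hy
    have hx2 : x^2 < 1 := by nlinarith
    have hy2 : y^2 ≤ 1 := by nlinarith [hy.1, hy.2]
    have h1 : x^2 * y^2 < 1 := by nlinarith [sq_nonneg y]
    have h0 : 0 ≤ x^2 * y^2 := by positivity
    rw [show (∑' n : ℕ, x^(2*n) * y^(2*n)) = ∑' n : ℕ, (x^2*y^2)^n by
        refine tsum_congr fun n => ?_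
        rw [mul_pow, pow_mul, pow_mul],
      tsum_geometric_of_lt_one h0 h1, one_div]
  rw [MeasureTheory.setIntegral_congr_fun measurableSet_Ioc key]
  have hval : ∀ n : ℕ, (∫ y in Set.Ioc (0:ℝ) 1, x^(2*n) * y^(2*n))
      = x^(2*n) / (2*(n:ℝ)+1) := by
    intro n
    rw [MeasureTheory.integral_const_mul, myPowInt]
    push_cast
    ring
  have hint : ∀ n : ℕ, Integrable (fun y : ℝ => x^(2*n) * y^(2*n))
      (volume.restrict (Set.Ioc (0:ℝ) 1)) := fun n =>
    (continuous_const.mul (continuous_pow _)).integrableOn_Ioc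
  have hnorm : ∀ n : ℕ, (∫ y in Set.Ioc (0:ℝ) 1, ‖x^(2*n) * y^(2*n)‖)
      = x^(2*n) / (2*(n:ℝ)+1) := by
    intro n
    rw [← hval n]
    refine MeasureTheory.setIntegral_congr_fun measurableSet_Ioc fun y hy => ?_
    rw [Real.norm_eq_abs,
      abs_of_nonneg (mul_nonneg (pow_nonneg hx0 _) (pow_nonneg hy.1.le _))]
  have hsum : Summable fun n : ℕ => ∫ y in Set.Ioc (0:ℝ) 1, ‖x^(2*n) * y^(2*n)‖ := by
    simp_rw [hnorm]
    refine Summable.of_nonneg_of_le (fun n => by positivity) (fun n => ?_)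
      (summable_geometric_of_lt_one (by positivity) (by nlinarith) :
        Summable fun n : ℕ => (x^2)^n)
    rw [← pow_mul]
    refine div_le_self (by positivity) ?_
    have := Nat.cast_nonneg (α := ℝ) n
    linarith
  rw [← MeasureTheory.integral_tsum_of_summable_integral_norm hint hsum]
  exact tsum_congr hval

set_option maxHeartbeats 1000000 in
lemma odd_sum : ∑' n : ℕ, 1 / (2*(n:ℝ)+1)^2 = π^2/8 := by
  have h := hasSum_zeta_two
  have heven : HasSum (fun k : ℕ => (1:ℝ)/(((2*k : ℕ)):ℝ)^2) (π^2/6/4) := by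
    have h4 := h.div_const 4
    convert h4 using 2 with k
    · rfl
    push_cast
    ring
  have hso : Summable (fun k : ℕ => (1:ℝ)/(2*(k:ℝ)+1)^2) := by
    have hi : Function.Injective (fun k : ℕ => 2*k+1) := by
      intro a b hab
      simp only at hab
      omega
    have := h.summable.comp_injective hi
    refine this.congr fun k => ?_
    simp only [Function.comp]
    push_cast
    ring
  obtain ⟨b, hb⟩ := hso
  have hfe : (fun k : ℕ => (1:ℝ)/(((2*k+1 : ℕ)):ℝ)^2)
      = fun k : ℕ => (1:ℝ)/(2*(k:ℝ)+1)^2 := by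
    funext k
    push_cast
    ring
  have htot : HasSum (fun n : ℕ => (1:ℝ)/(n:ℝ)^2) (π^2/6/4 + b) :=
    heven.even_add_odd (hfe ▸ hb)
  have hb8 : b = π^2/8 := by
    have := h.unique htot
    linarith
  rw [hb.tsum_eq, hb8]

theorem double_integral_pi_sq_div_eight :
    (∫ x in (0:ℝ)..1, ∫ y in (0:ℝ)..1, 1 / (1 - x ^ 2 * y ^ 2)) = Real.pi ^ 2 / 8 := by
  rw [intervalIntegral.integral_of_le zero_le_one]
  have hcong : ∀ᵐ x ∂(volume.restrict (Set.Ioc (0:ℝ) 1)),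
      (∫ y in (0:ℝ)..1, 1/(1-x^2*y^2)) = ∑' n : ℕ, x^(2*n)/(2*(n:ℝ)+1) := by
    rw [MeasureTheory.ae_restrict_iff' measurableSet_Ioc]
    have h1 : ({(1:ℝ)}ᶜ : Set ℝ) ∈ MeasureTheory.ae volume :=
      MeasureTheory.compl_mem_ae_iff.mpr Real.volume_singleton
    filter_upwards [h1] with x hx hmem
    exact inner_eq x hmem.1.le (lt_of_le_of_ne hmem.2 hx)
  rw [MeasureTheory.integral_congr_ae hcong]
  have hval : ∀ n : ℕ, (∫ x in Set.Ioc (0:ℝ) 1, x^(2*n)/(2*(n:ℝ)+1))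
      = 1 / (2*(n:ℝ)+1)^2 := by
    intro n
    simp_rw [div_eq_mul_inv, MeasureTheory.integral_mul_const, myPowInt]
    push_cast
    field_simp
  have hint : ∀ n : ℕ, Integrable (fun x : ℝ => x^(2*n)/(2*(n:ℝ)+1))
      (volume.restrict (Set.Ioc (0:ℝ) 1)) := fun n =>
    ((continuous_pow _).div_const _).integrableOn_Ioc
  have hnorm : ∀ n : ℕ, (∫ x in Set.Ioc (0:ℝ) 1, ‖x^(2*n)/(2*(n:ℝ)+1)‖)
      = 1 / (2*(n:ℝ)+1)^2 := by
    intro n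
    rw [← hval n]
    refine MeasureTheory.setIntegral_congr_fun measurableSet_Ioc fun x hx => ?_
    have h2n : (0:ℝ) ≤ 2*(n:ℝ)+1 := by positivity
    rw [Real.norm_eq_abs, abs_of_nonneg (div_nonneg (pow_nonneg hx.1.le _) h2n)]
  have hsum : Summable fun n : ℕ => ∫ x in Set.Ioc (0:ℝ) 1, ‖x^(2*n)/(2*(n:ℝ)+1)‖ := by
    simp_rw [hnorm]
    have hi : Function.Injective (fun k : ℕ => 2*k+1) := by
      intro a b hab
      simp only at hab
      omega
    have := hasSum_zeta_two.summable.comp_injective hi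
    refine this.congr fun k => ?_
    simp only [Function.comp]
    push_cast
    ring
  rw [← MeasureTheory.integral_tsum_of_summable_integral_norm hint hsum,
    tsum_congr hval, odd_sum]
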